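/- Let m ≥ 0 and n ≥ m+4 be integers, and let r_{n,m}^+ denote the unique positive zero of N_{n,m}(x). Then r_{n,m}^+ < r_{n,m+1}^+. -/

import Mathlib

/-!
Write `N_{n,m}(x) = ∑ c_k x^k`. For `k ≥ 1` one has
`k (k + 1) c_k = C(n,k) C(m,k-1) (m + 1 - k (n - m))`, so the coefficients change sign once.
For such a polynomial with a positive root `r`, `∑ w_k c_k r^k > 0` for all antitone weights `w`
that drop somewhere before the sign change. With `w_k = -(x / r)^k` this shows that the
polynomial is negative beyond `r`. With `w_k = λ_k = (n - k) / (k + 1)` it shows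
`N_{n,m+1}(r) > 0` at the root `r` of `N_{n,m}`, since `N_{n,m+1}(x) - N_{n,m}(x) = x ∑ d_k x^k`
with `d_k - λ_k c_k = (λ_k - λ_{k+1}) C(n,k+1) C(m,k-1) ≥ 0`.
-/

/-- The generalized Narayana polynomial `N_{n,m}(x)`, with the convention
`C(m, k-1) = 0` when `k = 0`. -/
noncomputable def genNarayana (n m : ℕ) (x : ℝ) : ℝ :=
  ∑ k ∈ Finset.range (n + 1),
    (((n.choose k : ℝ) * (m.choose k : ℝ)) -
      (if k = 0 then 0 else (n.choose (k + 1) : ℝ) * (m.choose (k - 1) : ℝ))) * x ^ k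

open Finset

def SignChangeAt (a : ℕ → ℝ) (s : ℕ) : Prop :=
  (∀ k ≤ s, 0 ≤ a k) ∧ ∀ k, s < k → a k ≤ 0

namespace SignChangeAt

variable {a w : ℕ → ℝ} {s : ℕ}

lemma mul_pow (ha : SignChangeAt a s) {r : ℝ} (hr : 0 ≤ r) :
    SignChangeAt (fun k => a k * r ^ k) s :=
  ⟨fun k hk => mul_nonneg (ha.1 k hk) (pow_nonneg hr k),
    fun k hk => mul_nonpos_of_nonpos_of_nonneg (ha.2 k hk) (pow_nonneg hr k)⟩

/-- Since `∑ a k = 0`, the weights may be shifted by `w (s + 1)`, after which every term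
`(w k - w (s + 1)) * a k` is nonnegative and the one at `k = 0` is positive. -/
lemma sum_mul_pos (ha : SignChangeAt a s) (ha0 : 0 < a 0) (hw : Antitone w)
    (hws : w (s + 1) < w 0) {N : ℕ} (hsum : ∑ k ∈ range (N + 1), a k = 0) :
    0 < ∑ k ∈ range (N + 1), w k * a k := by
  have hshift : ∑ k ∈ range (N + 1), w k * a k =
      ∑ k ∈ range (N + 1), (w k - w (s + 1)) * a k := by
    simp only [sub_mul, sum_sub_distrib, ← mul_sum, hsum, mul_zero, sub_zero]
  rw [hshift]
  refine sum_pos' (fun k _ => ?_) ⟨0, by simp, mul_pos (sub_pos.2 hws) ha0⟩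
  rcases le_or_gt k s with hk | hk
  · exact mul_nonneg (sub_nonneg.2 (hw (by omega))) (ha.1 k hk)
  · exact mul_nonneg_of_nonpos_of_nonpos (sub_nonpos.2 (hw hk)) (ha.2 k hk)

lemma lt_of_root (ha : SignChangeAt a s) (ha0 : 0 < a 0) {N : ℕ} {r x : ℝ} (hr : 0 < r)
    (hroot : ∑ k ∈ range (N + 1), a k * r ^ k = 0)
    (hx : 0 < ∑ k ∈ range (N + 1), a k * x ^ k) : x < r := by
  by_contra! hrx
  rcases hrx.eq_or_lt with rfl | hrx
  · linarith
  have hw : StrictAnti fun k : ℕ => -(x / r) ^ k :=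
    (pow_right_strictMono₀ ((one_lt_div hr).2 hrx)).neg
  have hneg := (ha.mul_pow hr.le).sum_mul_pos (by simpa using ha0) hw.antitone
    (hw s.succ_pos) hroot
  have hrescale : ∑ k ∈ range (N + 1), -(x / r) ^ k * (a k * r ^ k) =
      -∑ k ∈ range (N + 1), a k * x ^ k := by
    rw [← sum_neg_distrib]
    refine sum_congr rfl fun k _ => ?_
    rw [div_pow]
    field_simp
  linarith

end SignChangeAt

lemma Nat.cast_choose_succ_mul {R : Type*} [Ring R] (n k : ℕ) :
    (n.choose (k + 1) : R) * (k + 1) = n.choose k * (n - k) := by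
  rcases le_or_gt k n with hk | hk
  · have := congrArg (Nat.cast (R := R)) (Nat.choose_succ_right_eq n k)
    push_cast [Nat.cast_sub hk] at this
    exact this
  · simp [Nat.choose_eq_zero_of_lt hk, Nat.choose_eq_zero_of_lt (hk.trans k.lt_succ_self)]

noncomputable def chooseRatio (n k : ℕ) : ℝ := (n - k) / (k + 1)

lemma chooseRatio_mul_choose (n k : ℕ) : chooseRatio n k * n.choose k = n.choose (k + 1) := by
  rw [chooseRatio, div_mul_eq_mul_div, div_eq_iff (by positivity)]
  linarith [Nat.cast_choose_succ_mul (R := ℝ) n k]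

lemma chooseRatio_strictAnti (n : ℕ) : StrictAnti (chooseRatio n) :=
  strictAnti_nat_of_succ_lt fun k => by
    rw [chooseRatio, chooseRatio, div_lt_div_iff₀ (by positivity) (by positivity)]
    push_cast
    nlinarith

lemma chooseRatio_self (n : ℕ) : chooseRatio n n = 0 := by simp [chooseRatio]

noncomputable def genNarayanaCoeff (n m k : ℕ) : ℝ :=
  (n.choose k : ℝ) * m.choose k -
    if k = 0 then 0 else (n.choose (k + 1) : ℝ) * m.choose (k - 1)

lemma genNarayana_eq_sum (n m : ℕ) (x : ℝ) :
    genNarayana n m x = ∑ k ∈ range (n + 1), genNarayanaCoeff n m k * x ^ k := rfl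

@[simp]
lemma genNarayanaCoeff_zero (n m : ℕ) : genNarayanaCoeff n m 0 = 1 := by
  simp [genNarayanaCoeff]

lemma genNarayanaCoeff_succ (n m k : ℕ) :
    genNarayanaCoeff n m (k + 1) =
      n.choose (k + 1) * m.choose (k + 1) - n.choose (k + 2) * m.choose k := by
  simp [genNarayanaCoeff]

lemma genNarayanaCoeff_succ_mul (n m k : ℕ) :
    genNarayanaCoeff n m (k + 1) * ((k + 1) * (k + 2)) =
      n.choose (k + 1) * m.choose k * ((m + 1) - (k + 1) * (n - m)) := by
  have hn := Nat.cast_choose_succ_mul (R := ℝ) n (k + 1)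
  have hm := Nat.cast_choose_succ_mul (R := ℝ) m k
  push_cast at hn
  rw [genNarayanaCoeff_succ]
  linear_combination (n.choose (k + 1) : ℝ) * (k + 2) * hm - (m.choose k : ℝ) * (k + 1) * hn

lemma genNarayanaCoeff_signChangeAt {n m : ℕ} (h : m < n) :
    SignChangeAt (genNarayanaCoeff n m) ((m + 1) / (n - m)) := by
  have hnm : 0 < n - m := Nat.sub_pos_of_lt h
  have hcast : ((n - m : ℕ) : ℝ) = n - m := Nat.cast_sub h.le
  constructor
  · rintro (_ | k) hk
    · simp
    · have hk' : ((k + 1 : ℕ) : ℝ) * ((n - m : ℕ) : ℝ) ≤ ((m + 1 : ℕ) : ℝ) := by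
        exact_mod_cast (Nat.le_div_iff_mul_le hnm).1 hk
      push_cast [hcast] at hk'
      refine nonneg_of_mul_nonneg_left (b := ((k : ℝ) + 1) * (k + 2)) ?_ (by positivity)
      rw [genNarayanaCoeff_succ_mul]
      exact mul_nonneg (by positivity) (by linarith)
  · rintro (_ | k) hk
    · simp at hk
    · have hk' : ((m + 1 : ℕ) : ℝ) < ((k + 1 : ℕ) : ℝ) * ((n - m : ℕ) : ℝ) := by
        exact_mod_cast (Nat.div_lt_iff_lt_mul hnm).1 hk
      push_cast [hcast] at hk'
      refine nonpos_of_mul_nonpos_left (b := ((k : ℝ) + 1) * (k + 2)) ?_ (by positivity)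
      rw [genNarayanaCoeff_succ_mul]
      exact mul_nonpos_of_nonneg_of_nonpos (by positivity) (by linarith)

lemma genNarayana_succ_eq (n m : ℕ) (x : ℝ) :
    genNarayana n (m + 1) x = genNarayana n m x + x * ∑ k ∈ range n,
      (genNarayanaCoeff n (m + 1) (k + 1) - genNarayanaCoeff n m (k + 1)) * x ^ k := by
  simp only [genNarayana_eq_sum, sum_range_succ' _ n, genNarayanaCoeff_zero, mul_sum]
  rw [add_right_comm, ← sum_add_distrib]
  congr 1
  refine sum_congr rfl fun k _ => ?_
  ring

lemma chooseRatio_mul_genNarayanaCoeff_le (n m k : ℕ) :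
    chooseRatio n k * genNarayanaCoeff n m k ≤
      genNarayanaCoeff n (m + 1) (k + 1) - genNarayanaCoeff n m (k + 1) := by
  rcases k with _ | k
  · simp [chooseRatio, genNarayanaCoeff_succ, mul_add_one]
  · have h1 : chooseRatio n (k + 1) * n.choose (k + 1) = n.choose (k + 2) :=
      chooseRatio_mul_choose n (k + 1)
    have h2 : chooseRatio n (k + 2) * n.choose (k + 2) = n.choose (k + 3) :=
      chooseRatio_mul_choose n (k + 2)
    have hanti := (chooseRatio_strictAnti n (k + 1).lt_succ_self).le
    have hdiff : genNarayanaCoeff n (m + 1) (k + 2) - genNarayanaCoeff n m (k + 2) -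
        chooseRatio n (k + 1) * genNarayanaCoeff n m (k + 1) =
        (chooseRatio n (k + 1) - chooseRatio n (k + 2)) * n.choose (k + 2) * m.choose k := by
      simp only [genNarayanaCoeff_succ, Nat.choose_succ_succ' m, Nat.cast_add]
      linear_combination -(m.choose (k + 1) : ℝ) * h1 + (m.choose k : ℝ) * h2
    have : 0 ≤ (chooseRatio n (k + 1) - chooseRatio n (k + 2)) * n.choose (k + 2) * m.choose k :=
      mul_nonneg (mul_nonneg (sub_nonneg.2 hanti) (by positivity)) (by positivity)
    linarith

lemma genNarayana_succ_pos_of_root {n m : ℕ} (h : m < n) {r : ℝ} (hr : 0 < r)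
    (hroot : genNarayana n m r = 0) : 0 < genNarayana n (m + 1) r := by
  have hweighted :
      0 < ∑ k ∈ range (n + 1), chooseRatio n k * (genNarayanaCoeff n m k * r ^ k) :=
    ((genNarayanaCoeff_signChangeAt h).mul_pow hr.le).sum_mul_pos (by simp)
      (chooseRatio_strictAnti n).antitone (chooseRatio_strictAnti n (Nat.succ_pos _)) hroot
  have hle : ∑ k ∈ range n, chooseRatio n k * (genNarayanaCoeff n m k * r ^ k) ≤ ∑ k ∈ range n,
      (genNarayanaCoeff n (m + 1) (k + 1) - genNarayanaCoeff n m (k + 1)) * r ^ k :=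
    sum_le_sum fun k _ => by
      rw [← mul_assoc]
      exact mul_le_mul_of_nonneg_right (chooseRatio_mul_genNarayanaCoeff_le n m k)
        (by positivity)
  rw [sum_range_succ, chooseRatio_self, zero_mul, add_zero] at hweighted
  rw [genNarayana_succ_eq, hroot, zero_add]
  exact mul_pos hr (hweighted.trans_le hle)

theorem genNarayana_positive_zero_mono_in_m (m n : ℕ) (h : m + 4 ≤ n)
    (r r' : ℝ) (hr : 0 < r) (hroot : genNarayana n m r = 0)
    (hr' : 0 < r') (hroot' : genNarayana n (m + 1) r' = 0) :
    r < r' := by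
  have hpos := genNarayana_succ_pos_of_root (by omega) hr hroot
  rw [genNarayana_eq_sum] at hroot' hpos
  exact (genNarayanaCoeff_signChangeAt (by omega)).lt_of_root (by simp) hr' hroot' hpos
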